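/- For every integer h ≥ 1, the diameter of MC(2^h) equals n if h = 2n, and equals n + 1 if h = 2n + 1; equivalently, diam(MC(2^h)) = ⌈h/2⌉. -/

import Mathlib

/-- The circulant graph `Cay(Z_n, S)`: vertices are `ZMod n`, and distinct
vertices `x, y` are adjacent iff `x - y ≡ s` or `y - x ≡ s (mod n)` for some `s ∈ S`. -/
def circulantGraph (n : ℕ) (S : Set ℕ) : SimpleGraph (ZMod n) where
  Adj x y := x ≠ y ∧ ∃ s ∈ S, (x - y = (s : ZMod n) ∨ y - x = (s : ZMod n))
  symm := by
    constructor
    rintro x y ⟨hne, s, hs, h⟩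
    exact ⟨hne.symm, s, hs, h.symm⟩
  loopless := by
    constructor
    rintro x ⟨hne, -⟩
    exact hne rfl

/-- The multiplicative circulant graph `MC(m^h) = Cay(Z_{m^h}, {m^0, m^1, …, m^{h-1}})`. -/
def MCGraph (m h : ℕ) : SimpleGraph (ZMod (m ^ h)) :=
  circulantGraph (m ^ h) {s | ∃ i < h, s = m ^ i}

def Pow2 (z : ℤ) : Prop := ∃ i : ℕ, z = 2 ^ i ∨ z = -2 ^ i

def T : ℕ → ℤ
  | 0 => 0
  | 1 => 1
  | (n+2) => 4 * T n + 1

def gN (e : ℤ) : ℕ := 2 * e.natAbs - (if 0 < e then 1 else 0)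

lemma arith (e e' x : ℤ) (c : ℕ) (hx : x = 1 + e - 4 * e')
    (hb : x.natAbs + (if x % 2 = 0 then 0 else 1) ≤ 2 * c) :
    gN e' + 1 ≤ c + gN e := by
  unfold gN
  split_ifs at * <;> omega

lemma pow2_small {z : ℤ} (hz : Pow2 z) (hs : z.natAbs ≤ 2) :
    z = 1 ∨ z = -1 ∨ z = 2 ∨ z = -2 := by
  obtain ⟨i, hi⟩ := hz
  match i with
  | 0 => rcases hi with h|h <;> subst h <;> norm_num
  | 1 => rcases hi with h|h <;> subst h <;> norm_num
  | (j+2) =>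
    exfalso
    have h4 : (4:ℕ) ≤ 2 ^ (j+2) := by
      calc (4:ℕ) = 2^2 := by norm_num
      _ ≤ 2^(j+2) := Nat.pow_le_pow_right (by norm_num) (by omega)
    have : z.natAbs = 2 ^ (j+2) := by
      rcases hi with h|h <;> subst h <;> simp [Int.natAbs_pow]
    omega

lemma pow2_big {z : ℤ} (hz : Pow2 z) (hs : ¬ z.natAbs ≤ 2) :
    ∃ w, Pow2 w ∧ z = 4 * w := by
  obtain ⟨i, hi⟩ := hz
  match i with
  | 0 => exfalso; rcases hi with h|h <;> subst h <;> simp at hs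
  | 1 => exfalso; rcases hi with h|h <;> subst h <;> simp at hs
  | (j+2) =>
    rcases hi with h|h
    · exact ⟨2^j, ⟨j, Or.inl rfl⟩, by rw [h]; ring⟩
    · exact ⟨-2^j, ⟨j, Or.inr rfl⟩, by rw [h]; ring⟩

/-- partition a list of signed powers of two into small and big parts -/
lemma partition_lemma : ∀ l : List ℤ, (∀ z ∈ l, Pow2 z) →
    ∃ (c : ℕ) (x : ℤ) (l' : List ℤ), (∀ w ∈ l', Pow2 w) ∧
      l.sum = x + 4 * l'.sum ∧ l.length = c + l'.length ∧
      x.natAbs + (if x % 2 = 0 then 0 else 1) ≤ 2 * c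
  | [], _ => ⟨0, 0, [], by simp⟩
  | z :: l, hl => by
    obtain ⟨c, x, l', hl', hsum, hlen, hb⟩ :=
      partition_lemma l (fun w hw => hl w (List.mem_cons_of_mem _ hw))
    have hz := hl z List.mem_cons_self
    by_cases hs : z.natAbs ≤ 2
    · refine ⟨c + 1, x + z, l', hl', by simp [hsum]; ring, by simp [hlen]; ring, ?_⟩
      rcases pow2_small hz hs with h|h|h|h <;> subst h <;> split_ifs at * <;> omega
    · obtain ⟨w, hw, hzw⟩ := pow2_big hz hs
      refine ⟨c, x, w :: l', ?_, by simp [hsum, hzw]; ring, by simp [hlen]; ring, hb⟩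
      intro v hv
      rcases List.mem_cons.mp hv with h|h
      · exact h ▸ hw
      · exact hl' v h

lemma key : ∀ h : ℕ, ∀ e : ℤ, ∀ l : List ℤ, (∀ z ∈ l, Pow2 z) →
    Int.ModEq (2 ^ h) (T h + e) l.sum → (h + 1) / 2 ≤ l.length + gN e := by
  intro h
  induction h using Nat.twoStepInduction with
  | zero => intro e l _ _; simp
  | one =>
    intro e l hl hm
    by_cases he : e = 0
    · subst he
      rcases l with _ | ⟨z, l⟩
      · exfalso
        simp only [T, List.sum_nil, add_zero] at hm
        have := hm.dvd
        omega
      · simp [gN]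
    · have : 1 ≤ gN e := by unfold gN; split_ifs <;> omega
      omega
  | more h ihh _ =>
    intro e l hl hm
    obtain ⟨c, x, l', hl', hsum, hlen, hb⟩ := partition_lemma l hl
    have hdvd : ((2:ℤ) ^ (h+2)) ∣ (l.sum - (T (h+2) + e)) := hm.dvd
    have hT : T (h + 2) = 4 * T h + 1 := rfl
    have h4 : (4:ℤ) ∣ (1 + e - x) := by
      have h42 : ((4:ℤ)) ∣ (2:ℤ)^(h+2) := by
        have : ((2:ℤ))^2 ∣ 2^(h+2) := pow_dvd_pow 2 (by omega)
        simpa using this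
      have := dvd_trans h42 hdvd
      rw [hsum, hT] at this
      omega
    obtain ⟨e', he'⟩ : ∃ e', 1 + e - x = 4 * e' := ⟨(1 + e - x)/4, by omega⟩
    have hm' : Int.ModEq (2 ^ h) (T h + e') l'.sum := by
      rw [Int.modEq_iff_dvd]
      have key4 : l.sum - (T (h+2) + e) = 4 * (l'.sum - (T h + e')) := by
        rw [hsum, hT]; linarith [he']
      have : (4:ℤ) * 2 ^ h ∣ 4 * (l'.sum - (T h + e')) := by
        rw [← key4]
        have : ((2:ℤ))^(h+2) = 4 * 2^h := by ring
        rw [← this]; exact hdvd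
      exact (mul_dvd_mul_iff_left (by norm_num : (4:ℤ) ≠ 0)).mp this
    have ih := ihh e' l' hl' hm'
    have ha := arith e e' x c (by omega) hb
    omega


def Pow2B (h : ℕ) (z : ℤ) : Prop := ∃ i < h, z = 2 ^ i ∨ z = -2 ^ i

lemma rep_exists : ∀ h : ℕ, ∀ d : ℤ, ∃ l : List ℤ, (∀ z ∈ l, Pow2B h z) ∧
    l.length ≤ (h + 1) / 2 ∧ Int.ModEq (2 ^ h) d l.sum := by
  intro h
  induction h using Nat.twoStepInduction with
  | zero =>
    intro d
    exact ⟨[], by simp, by simp, by simpa using Int.modEq_one⟩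
  | one =>
    intro d
    by_cases hd : 2 ∣ d
    · exact ⟨[], by simp, by simp, by rw [Int.modEq_iff_dvd]; simpa using hd⟩
    · refine ⟨[1], ?_, by simp, ?_⟩
      · intro z hz; simp at hz; exact ⟨0, by norm_num, by simp [hz]⟩
      · rw [Int.modEq_iff_dvd]; simp; omega
  | more h ih _ =>
    intro d
    have ht : ∃ t : ℤ, (t = 0 ∨ t = 1 ∨ t = 2 ∨ t = -1) ∧ (4:ℤ) ∣ d - t := by
      rcases Int.emod_emod_of_dvd d (by norm_num : (2:ℤ) ∣ 4) with _
      have h4 : d % 4 = 0 ∨ d % 4 = 1 ∨ d % 4 = 2 ∨ d % 4 = 3 := by omega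
      rcases h4 with h|h|h|h
      · exact ⟨0, by tauto, by omega⟩
      · exact ⟨1, by tauto, by omega⟩
      · exact ⟨2, by tauto, by omega⟩
      · exact ⟨-1, by tauto, by omega⟩
    obtain ⟨t, ht, hdvd⟩ := ht
    obtain ⟨d', hd'⟩ : ∃ d', d - t = 4 * d' := ⟨(d - t)/4, by omega⟩
    obtain ⟨l, hl, hlen, hmod⟩ := ih d'
    refine ⟨(if t = 0 then [] else [t]) ++ l.map (fun z => 4 * z), ?_, ?_, ?_⟩
    · intro z hz
      rcases List.mem_append.mp hz with hz|hz
      · have hzt : z = t := by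
          split_ifs at hz with h0
          · simp at hz
          · simpa using hz
        subst hzt
        rcases ht with h|h|h|h
        · exfalso; rw [if_pos h] at hz; simp at hz
        · exact ⟨0, by omega, by simp [h]⟩
        · exact ⟨1, by omega, by simp [h]⟩
        · exact ⟨0, by omega, by simp [h]⟩
      · obtain ⟨w, hw, rfl⟩ := List.mem_map.mp hz
        obtain ⟨i, hi, hwi⟩ := hl w hw
        refine ⟨i + 2, by omega, ?_⟩
        rcases hwi with h|h <;> subst h
        · left; ring
        · right; ring
    · have : (if t = 0 then ([]:List ℤ) else [t]).length ≤ 1 := by split_ifs <;> simp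
      simp only [List.length_append, List.length_map]
      omega
    · have hsum : ((if t = 0 then ([]:List ℤ) else [t]) ++ l.map (fun z => 4 * z)).sum
          = t + 4 * l.sum := by
        have h1 : (if t = 0 then ([]:List ℤ) else [t]).sum = t := by
          split_ifs with h0 <;> simp [h0]
      
        have h2 : ∀ m : List ℤ, (m.map (fun z => 4 * z)).sum = 4 * m.sum := by
          intro m
          induction m with
          | nil => simp
          | cons a m ihm => simp [ihm]; ring
        simp [h1, h2 l]
      rw [hsum, Int.modEq_iff_dvd]
      have := hmod.dvd
      have hpow : ((2:ℤ))^(h+2) = 4 * 2^h := by ring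
      rw [hpow]
      obtain ⟨k, hk⟩ := this
      exact ⟨k, by linarith⟩

lemma MC_adj {h : ℕ} {x y : ZMod (2^h)} :
    (MCGraph 2 h).Adj x y ↔ x ≠ y ∧ ∃ s ∈ {s : ℕ | ∃ i < h, s = 2 ^ i},
      (x - y = (s : ZMod (2^h)) ∨ y - x = (s : ZMod (2^h))) := Iff.rfl

lemma adj_step (h i : ℕ) (hi : i < h) (u : ZMod (2^h)) (z : ℤ)
    (hz : z = 2^i ∨ z = -2^i) : (MCGraph 2 h).Adj u (u + (z : ZMod (2^h))) := by
  haveI : NeZero ((2:ℕ)^h) := ⟨pow_ne_zero _ two_ne_zero⟩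
  have hz0 : ((z : ZMod (2^h))) ≠ 0 := by
    intro h0
    rw [ZMod.intCast_zmod_eq_zero_iff_dvd] at h0
    have hd : ((2:ℤ)^h) ∣ z := by push_cast at h0; exact h0
    have : ((2:ℤ)^h) ∣ 2^i := by
      rcases hz with rfl|rfl
      · exact hd
      · exact dvd_neg.mp hd
    have h2 : ((2:ℕ)^h) ∣ 2^i := by
      have := Int.natAbs_dvd_natAbs.mpr this
      simpa [Int.natAbs_pow] using this
    have := (Nat.pow_dvd_pow_iff_le_right (by norm_num : 1 < 2)).mp h2
    omega
  rw [MC_adj]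
  have hne : u ≠ u + (z : ZMod (2^h)) := by
    intro he
    apply hz0
    have : u + (z : ZMod (2^h)) - u = 0 := by rw [← he]; ring
    rwa [add_sub_cancel_left] at this
  refine ⟨hne, 2^i, ⟨i, hi, rfl⟩, ?_⟩
  rcases hz with rfl|rfl
  · right; push_cast; ring
  · left; push_cast; ring

lemma walk_of_rep (h : ℕ) : ∀ (l : List ℤ), (∀ z ∈ l, Pow2B h z) →
    ∀ u : ZMod (2^h),
    ∃ p : (MCGraph 2 h).Walk u (u + ((l.sum : ℤ) : ZMod (2^h))), p.length = l.length := by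
  intro l
  induction l with
  | nil =>
    intro _ u
    exact ⟨SimpleGraph.Walk.nil.copy rfl (by simp), by rw [SimpleGraph.Walk.length_copy]; rfl⟩
  | cons z l ih =>
    intro hl u
    obtain ⟨i, hi, hz⟩ := hl z List.mem_cons_self
    obtain ⟨p, hp⟩ := ih (fun w hw => hl w (List.mem_cons_of_mem _ hw)) (u + (z : ZMod (2^h)))
    have hadj := adj_step h i hi u z hz
    have hend : (u + (z : ZMod (2^h))) + ((l.sum : ℤ) : ZMod (2^h))
        = u + (((z :: l).sum : ℤ) : ZMod (2^h)) := by push_cast [List.map_cons, List.sum_cons]; ring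
    exact ⟨(SimpleGraph.Walk.cons hadj (p.copy rfl hend)), by rw [SimpleGraph.Walk.length_cons, SimpleGraph.Walk.length_copy, hp]; simp⟩

lemma rep_of_walk (h : ℕ) {u v : ZMod (2^h)} (p : (MCGraph 2 h).Walk u v) :
    ∃ l : List ℤ, (∀ z ∈ l, Pow2 z) ∧ l.length = p.length ∧
      v - u = ((l.sum : ℤ) : ZMod (2^h)) := by
  induction p with
  | nil => exact ⟨[], by simp, by simp, by simp⟩
  | @cons u w v hadj p ihp =>
    obtain ⟨l, hl, hlen, hsum⟩ := ihp
    obtain ⟨hne, s, ⟨i, hi, rfl⟩, hcase⟩ := MC_adj.mp hadj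
    have hlp : ∀ (z : ℤ), (z = 2^i ∨ z = -2^i) → (w - u = (z : ZMod (2^h))) →
        ∃ l' : List ℤ, (∀ x ∈ l', Pow2 x) ∧ l'.length = (SimpleGraph.Walk.cons hadj p).length ∧
          v - u = ((l'.sum : ℤ) : ZMod (2^h)) := by
      intro z hz hwu
      refine ⟨z :: l, ?_, by simp [hlen], ?_⟩
      · intro x hx
        rcases List.mem_cons.mp hx with rfl|hx
        · exact ⟨i, hz⟩
        · exact hl x hx
      · have : v - u = (v - w) + (w - u) := by ring
        rw [this, hsum, hwu]; push_cast [List.map_cons, List.sum_cons]; ring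
    rcases hcase with hc|hc
    · exact hlp (-(2^i)) (Or.inr (by ring)) (by rw [← neg_sub u w, hc]; push_cast; ring)
    · exact hlp (2^i) (Or.inl rfl) (by rw [hc]; push_cast; ring)

lemma MC_ediam (h : ℕ) : (MCGraph 2 h).ediam = (((h+1)/2 : ℕ) : ℕ∞) := by
  haveI : NeZero ((2:ℕ)^h) := ⟨pow_ne_zero _ two_ne_zero⟩
  have hmodcast : (((2:ℕ)^h : ℕ) : ℤ) = (2:ℤ)^h := by push_cast; ring
  apply le_antisymm
  · apply SimpleGraph.ediam_le_of_edist_le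
    intro u v
    obtain ⟨l, hl, hlen, hmod⟩ := rep_exists h ((v - u).val : ℤ)
    have hcast : ((l.sum : ℤ) : ZMod (2^h)) = v - u := by
      have h1 : ((((v - u).val : ℤ) : ZMod (2^h))) = v - u := by
        push_cast
        rw [ZMod.natCast_val, ZMod.cast_id]
      rw [← h1, ZMod.intCast_eq_intCast_iff]
      unfold Int.ModEq
      rw [hmodcast]
      exact hmod.symm
    obtain ⟨p, hp⟩ := walk_of_rep h l hl u
    have hv : u + ((l.sum : ℤ) : ZMod (2^h)) = v := by rw [hcast]; ring
    calc (MCGraph 2 h).edist u v ≤ (p.copy rfl hv).length := SimpleGraph.edist_le _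
      _ = (l.length : ℕ∞) := by simp [hp]
      _ ≤ (((h+1)/2 : ℕ) : ℕ∞) := Nat.cast_le.mpr hlen
  · have hlb : (((h+1)/2 : ℕ) : ℕ∞) ≤ (MCGraph 2 h).edist 0 ((T h : ℤ) : ZMod (2^h)) := by
      rw [SimpleGraph.edist_eq_sInf]
      apply le_sInf
      rintro b ⟨p, rfl⟩
      obtain ⟨l, hl, hlen, hsum⟩ := rep_of_walk h p
      have hz : ((T h : ℤ) : ZMod (2^h)) = ((l.sum : ℤ) : ZMod (2^h)) := by
        rw [← sub_zero (((T h : ℤ) : ZMod (2^h)))]; exact hsum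
      have hmod : Int.ModEq (2^h) (T h + 0) l.sum := by
        rw [add_zero]
        have h2 := (ZMod.intCast_eq_intCast_iff _ _ _).mp hz
        unfold Int.ModEq at h2 ⊢
        rwa [hmodcast] at h2
      have hk := key h 0 l hl hmod
      have hg : gN 0 = 0 := by simp [gN]
      exact Nat.cast_le.mpr (by omega)
    exact hlb.trans SimpleGraph.edist_le_ediam

/-- The diameter of `MC(2^h)` equals `n` if `h = 2n` and `n + 1` if `h = 2n + 1`;
equivalently, it equals `⌈h / 2⌉`. -/
theorem MC_two_diam (h : ℕ) (hh : 1 ≤ h) :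
    (∀ n : ℕ, h = 2 * n → (MCGraph 2 h).diam = n) ∧
    (∀ n : ℕ, h = 2 * n + 1 → (MCGraph 2 h).diam = n + 1) ∧
    (MCGraph 2 h).diam = (h + 1) / 2 := by
  have hd : (MCGraph 2 h).diam = (h+1)/2 := by
    have hdef : (MCGraph 2 h).diam = ((MCGraph 2 h).ediam).toNat := rfl
    rw [hdef, MC_ediam h]
    simp
  exact ⟨fun n hn => by rw [hd]; omega, fun n hn => by rw [hd]; omega, hd⟩
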